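/- For all integers x ≥ 1 and m ≥ x+2, twice the number of codewords of C(m,x) whose x+2 leftmost bits are 0 followed by x+1 ones (i.e., codewords starting with 0 1^{x+1} from the left, Group 2) is N(m−x−1,x). -/

import Mathlib

/-- `noForbidden m x c` says the binary word `c = (c_{m-1}, …, c_0)` contains no contiguous
subword of the form `0 1^y 0` or `1 0^y 1` for any `1 ≤ y ≤ x`. -/
def noForbidden (m x : ℕ) (c : Fin m → Bool) : Prop :=
  ∀ j y : ℕ, 1 ≤ y → y ≤ x → (h : j + y + 1 < m) →
    ¬ ((∀ k, 1 ≤ k → (hk : k ≤ y) → c ⟨j + k, by omega⟩ = ! c ⟨j, by omega⟩) ∧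
        c ⟨j + y + 1, h⟩ = c ⟨j, by omega⟩)

/-- `N(m, x)`: the cardinality of the LOCO code `C(m, x)`. -/
noncomputable def locoN (m x : ℕ) : ℕ := Nat.card {c : Fin m → Bool // noForbidden m x c}

/-- `N(k, x)` extended to integer `k` by the convention `N(k, x) = 2` for `k ≤ 1`. -/
noncomputable def Nex (k : ℤ) (x : ℕ) : ℤ := if k ≤ 1 then 2 else (locoN k.toNat x : ℤ)

/-- Strict lexicographic order on binary words, comparing bits from `c_{m-1}`
(most significant) down to `c_0`, with `0 < 1`. -/
def lexLt (m : ℕ) (d c : Fin m → Bool) : Prop :=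
  ∃ i : Fin m, d i = false ∧ c i = true ∧ ∀ j : Fin m, (i : ℕ) < (j : ℕ) → d j = c j

/-- The index `g(m, x, c)` of a codeword: the number of codewords of `C(m, x)` that
precede `c` in lexicographic order. -/
noncomputable def locoIdx (m x : ℕ) (c : Fin m → Bool) : ℕ :=
  Nat.card {d : Fin m → Bool // noForbidden m x d ∧ lexLt m d c}
/-!
A Group 2 codeword is `0 1^{x+1}` followed by a word `d` of length `m - x - 1` whose leftmost
bit is `1`. The leading `0` is followed by at least `x + 2` ones, so no forbidden pattern can
straddle the boundary, and Group 2 corresponds exactly to the codewords of `C(m - x - 1, x)`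
starting with `1`. Complementing every bit preserves the constraint, so these are exactly half
of `C(m - x - 1, x)`.
-/

variable {m n x : ℕ}

theorem noForbidden.not {c : Fin m → Bool} (h : noForbidden m x c) :
    noForbidden m x (fun i => !c i) := by
  intro j y hy1 hyx hlt ⟨hflip, hend⟩
  refine h j y hy1 hyx hlt ⟨fun k hk1 hk2 => ?_, ?_⟩
  · simpa using hflip k hk1 hk2
  · simpa using hend

theorem noForbidden_not_iff {c : Fin m → Bool} :
    noForbidden m x (fun i => !c i) ↔ noForbidden m x c :=
  ⟨fun h => by simpa using h.not, noForbidden.not⟩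

theorem noForbidden.castLE {c : Fin m → Bool} (h : noForbidden m x c) (hnm : n ≤ m) :
    noForbidden n x (c ∘ Fin.castLE hnm) :=
  fun j y hy1 hyx hlt hwin => h j y hy1 hyx (by omega) hwin

theorem noForbidden_of_castLE_of_prefix {c : Fin m → Bool} (hnm : n + x + 2 ≤ m)
    (hlow : noForbidden (n + 1) x (c ∘ Fin.castLE (by omega)))
    (hones : ∀ i : Fin m, n ≤ i → (i : ℕ) + 1 < m → c i = true)
    (htop : c ⟨m - 1, by omega⟩ = false) :
    noForbidden m x c := by
  intro j y hy1 hyx hlt ⟨hflip, hend⟩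
  by_cases hin : j + y + 1 < n + 1
  · exact hlow j y hy1 hyx hin ⟨hflip, hend⟩
  -- As `y ≤ x`, a window ending at the top `0` starts inside the run of ones, and a window
  -- ending at a `1` of the run has its second-to-last bit in the run as well.
  have hmid := hflip y hy1 le_rfl
  by_cases hlast : j + y + 1 = m - 1
  · have hj : c ⟨j, by omega⟩ = true := hones _ (by simp only; omega) (by simp only; omega)
    have : c ⟨j + y + 1, hlt⟩ = false := by rw [← htop]; congr 2
    simp_all
  · have hend' : c ⟨j + y + 1, hlt⟩ = true :=
      hones _ (by simp only; omega) (by simp only; omega)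
    have hjy : c ⟨j + y, by omega⟩ = true := hones _ (by simp only; omega) (by simp only; omega)
    simp_all

theorem noForbidden_of_le_two (hm : m ≤ 2) (c : Fin m → Bool) : noForbidden m x c :=
  fun _ _ hy1 _ hlt => absurd hlt (by omega)

theorem locoN_of_le_two (hm : m ≤ 2) (x : ℕ) : locoN m x = 2 ^ m := by
  rw [locoN, Nat.card_congr (Equiv.subtypeUnivEquiv (noForbidden_of_le_two hm)),
    Nat.card_eq_fintype_card, Fintype.card_fun, Fintype.card_bool, Fintype.card_fin]

theorem Nat.card_subtype_eq_card_and_add_card_and_not {α : Type*} [Finite α] (p q : α → Prop) :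
    Nat.card {a // p a} = Nat.card {a // p a ∧ q a} + Nat.card {a // p a ∧ ¬ q a} := by
  classical
  rw [← Nat.card_sum]
  exact Nat.card_congr ((Equiv.sumCompl fun a : {a // p a} => q a).symm.trans
    (Equiv.sumCongr (Equiv.subtypeSubtypeEquivSubtypeInter p q)
      (Equiv.subtypeSubtypeEquivSubtypeInter p fun a => ¬ q a)))

theorem card_noForbidden_last_eq_true_eq_card_last_ne_true (n x : ℕ) :
    Nat.card {c : Fin (n + 1) → Bool // noForbidden (n + 1) x c ∧ c (Fin.last n) = true} =
      Nat.card {c : Fin (n + 1) → Bool // noForbidden (n + 1) x c ∧ ¬ c (Fin.last n) = true} :=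
  Nat.card_congr <| Equiv.subtypeEquiv
    ⟨fun c i => !c i, fun c i => !c i, fun c => by simp, fun c => by simp⟩
    fun c => by
      simp only [Equiv.coe_fn_mk, noForbidden_not_iff, Bool.not_eq_true', Bool.not_eq_false]

theorem two_mul_card_noForbidden_last_eq_true (n x : ℕ) :
    2 * Nat.card {c : Fin (n + 1) → Bool // noForbidden (n + 1) x c ∧ c (Fin.last n) = true} =
      locoN (n + 1) x := by
  rw [locoN, Nat.card_subtype_eq_card_and_add_card_and_not (noForbidden (n + 1) x)
    fun c => c (Fin.last n) = true, ← card_noForbidden_last_eq_true_eq_card_last_ne_true, two_mul]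

theorem Nex_natCast {k : ℕ} (hk : 1 ≤ k) (x : ℕ) : Nex k x = locoN k x := by
  obtain rfl | hk : k = 1 ∨ 2 ≤ k := by omega
  · simp [Nex, locoN_of_le_two]
  · simp [Nex, show ¬ (k : ℤ) ≤ 1 by omega]

def prependZeroOnes (m : ℕ) (d : Fin n → Bool) : Fin m → Bool :=
  fun i => if h : (i : ℕ) < n then d ⟨i, h⟩ else decide ((i : ℕ) + 1 < m)

theorem prependZeroOnes_comp_castLE (hnm : n ≤ m) (d : Fin n → Bool) :
    prependZeroOnes m d ∘ Fin.castLE hnm = d := by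
  funext i
  simp [prependZeroOnes]

theorem prependZeroOnes_of_le (d : Fin n → Bool) {i : Fin m} (hi : n ≤ i) :
    prependZeroOnes m d i = decide ((i : ℕ) + 1 < m) := by
  simp [prependZeroOnes, hi]

theorem prependZeroOnes_eq_true {d : Fin (n + 1) → Bool} (hlast : d (Fin.last n) = true)
    {i : Fin m} (hni : n ≤ i) (him : (i : ℕ) + 1 < m) : prependZeroOnes m d i = true := by
  obtain hin | hin := hni.eq_or_lt
  · simpa [prependZeroOnes, ← hin, Fin.last] using hlast
  · simpa [prependZeroOnes_of_le _ hin] using him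

theorem prependZeroOnes_last (hnm : n < m) (d : Fin n → Bool) :
    prependZeroOnes m d ⟨m - 1, by omega⟩ = false := by
  simp [prependZeroOnes, show ¬ m - 1 < n by omega, show ¬ m - 1 + 1 < m by omega]

theorem prependZeroOnes_comp_castLE_self {c : Fin m → Bool} (hnm : n < m)
    (hones : ∀ i : Fin m, n ≤ i → (i : ℕ) + 1 < m → c i = true)
    (hlast : c ⟨m - 1, by omega⟩ = false) :
    prependZeroOnes m (c ∘ Fin.castLE hnm.le) = c := by
  funext i
  by_cases hin : (i : ℕ) < n
  · simp [prependZeroOnes, hin]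
  rw [prependZeroOnes_of_le _ (not_lt.1 hin)]
  by_cases him : (i : ℕ) + 1 < m
  · simp [him, hones i (not_lt.1 hin) him]
  · rw [show i = ⟨m - 1, by omega⟩ from Fin.ext (by simp only; omega), hlast]
    simp only [decide_eq_false_iff_not]
    omega

theorem noForbidden_prependZeroOnes (hnm : n + x + 2 ≤ m) {d : Fin (n + 1) → Bool}
    (hd : noForbidden (n + 1) x d) (hlast : d (Fin.last n) = true) :
    noForbidden m x (prependZeroOnes m d) :=
  noForbidden_of_castLE_of_prefix hnm (by rwa [prependZeroOnes_comp_castLE])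
    (fun _ => prependZeroOnes_eq_true hlast) (prependZeroOnes_last (by omega) d)

def group2EquivLastEqTrue (n x : ℕ) :
    {c : Fin (n + x + 2) → Bool // noForbidden (n + x + 2) x c ∧
      c ⟨n + x + 2 - 1, by omega⟩ = false ∧
      ∀ k, 1 ≤ k → k ≤ x + 1 → c ⟨n + x + 2 - 1 - k, by omega⟩ = true} ≃
    {d : Fin (n + 1) → Bool // noForbidden (n + 1) x d ∧ d (Fin.last n) = true} where
  toFun c := ⟨c.1 ∘ Fin.castLE (by omega), c.2.1.castLE _, by
    simpa [Fin.last, show n + x + 2 - 1 - (x + 1) = n by omega]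
      using c.2.2.2 (x + 1) (by omega) le_rfl⟩
  invFun d := ⟨prependZeroOnes (n + x + 2) d.1, noForbidden_prependZeroOnes le_rfl d.2.1 d.2.2,
    prependZeroOnes_last (by omega) d.1,
    fun _ _ _ => prependZeroOnes_eq_true d.2.2 (by simp only; omega) (by simp only; omega)⟩
  left_inv c := by
    refine Subtype.ext (prependZeroOnes_comp_castLE_self (by omega) (fun i hni him => ?_) c.2.2.1)
    simpa [show n + x + 1 - (n + x + 1 - (i : ℕ)) = i by omega]
      using c.2.2.2 (n + x + 1 - i) (by omega) (by omega)
  right_inv d := Subtype.ext (prependZeroOnes_comp_castLE _ d.1)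

/-- For all `x ≥ 1` and `m ≥ x + 2`, twice the number of codewords of
`C(m, x)` starting from the left with `0` followed by `x + 1` ones (Group 2)
is `N(m - x - 1, x)`. -/
theorem loco_group2_card (m x : ℕ) (hm : x + 2 ≤ m) :
    2 * (Nat.card {c : Fin m → Bool // noForbidden m x c ∧
          c ⟨m - 1, by omega⟩ = false ∧
          ∀ k, 1 ≤ k → k ≤ x + 1 → c ⟨m - 1 - k, by omega⟩ = true} : ℤ)
      = Nex ((m : ℤ) - (x : ℤ) - 1) x := by
  obtain ⟨n, rfl⟩ : ∃ n, m = n + x + 2 := ⟨m - x - 2, by omega⟩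
  rw [show ((n + x + 2 : ℕ) : ℤ) - x - 1 = ((n + 1 : ℕ) : ℤ) by push_cast; ring,
    Nex_natCast (by omega), ← two_mul_card_noForbidden_last_eq_true,
    ← Nat.card_congr (group2EquivLastEqTrue n x), Nat.cast_mul, Nat.cast_ofNat]
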